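/- Let T > 0. For every s ∈ ℝ, q ∈ [0,1], t ∈ [0,T] and pair X = (u,v) ∈ ℍ^{s+q}, the wave group satisfies ‖(E(t) − I)X‖_{ℍ^s} ≤ max(4, 2T) t^q ‖X‖_{ℍ^{s+q}}. (Lemma 2.2, group estimate) -/

import Mathlib

open scoped BigOperators
open Filter MeasureTheory

noncomputable section

/-- Coefficient sequences `u = (u^{ℓ,m})` with respect to the spherical harmonics,
indexed by degree `ℓ ∈ ℕ` and order `m ∈ {-ℓ,…,ℓ}` (encoded as `Fin (2ℓ+1)`). -/
abbrev Coef := (ℓ : ℕ) → Fin (2 * ℓ + 1) → ℂ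

/-- Eigenvalue `ℓ(ℓ+1)` of `-Δ_{𝕊²}`. -/
def lam (ℓ : ℕ) : ℝ := ℓ * (ℓ + 1)

/-- Squared `H^s(𝕊²)` norm: `∑_{ℓ,m} (1+ℓ(ℓ+1))^s |u^{ℓ,m}|²`. -/
def hnormSq (s : ℝ) (u : Coef) : ℝ :=
  ∑' ℓ : ℕ, ∑ m : Fin (2 * ℓ + 1), (1 + lam ℓ) ^ s * ‖u ℓ m‖ ^ 2

/-- Membership `u ∈ H^s(𝕊²)`: the defining series converges. -/
def memH (s : ℝ) (u : Coef) : Prop :=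
  Summable (fun ℓ : ℕ => ∑ m : Fin (2 * ℓ + 1), (1 + lam ℓ) ^ s * ‖u ℓ m‖ ^ 2)

/-- `H^s(𝕊²)` norm. -/
def hnorm (s : ℝ) (u : Coef) : ℝ := Real.sqrt (hnormSq s u)

/-- The cosine operator `C(t) = cos(t(-Δ)^{1/2})`: multiplication of the
`(ℓ,m)` coefficient by `cos(t√(ℓ(ℓ+1)))`. -/
def cosOp (t : ℝ) (u : Coef) : Coef :=
  fun ℓ m => ((Real.cos (t * Real.sqrt (lam ℓ)) : ℝ) : ℂ) * u ℓ m

/-- The operator `(-Δ)^{-1/2} S(t)` with `S(t) = sin(t(-Δ)^{1/2})`: multiplication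
by `t` for `ℓ = 0` and by `sin(t√(ℓ(ℓ+1)))/√(ℓ(ℓ+1))` for `ℓ ≥ 1`. -/
def sincOp (t : ℝ) (v : Coef) : Coef :=
  fun ℓ m => if ℓ = 0 then (t : ℂ) * v ℓ m
    else ((Real.sin (t * Real.sqrt (lam ℓ)) / Real.sqrt (lam ℓ) : ℝ) : ℂ) * v ℓ m

/-- The operator `(-Δ)^{1/2} S(t)`: multiplication by `√(ℓ(ℓ+1)) sin(t√(ℓ(ℓ+1)))`. -/
def sqrtSinOp (t : ℝ) (u : Coef) : Coef :=
  fun ℓ m => ((Real.sqrt (lam ℓ) * Real.sin (t * Real.sqrt (lam ℓ)) : ℝ) : ℂ) * u ℓ m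

/-- Squared `ℍ^s = H^s × H^{s-1}` norm of a pair. -/
def hnormPairSq (s : ℝ) (X : Coef × Coef) : ℝ := hnormSq s X.1 + hnormSq (s - 1) X.2

/-- `ℍ^s` norm of a pair. -/
def hnormPair (s : ℝ) (X : Coef × Coef) : ℝ := Real.sqrt (hnormPairSq s X)

/-- Membership `X ∈ ℍ^s = H^s × H^{s-1}`. -/
def memHPair (s : ℝ) (X : Coef × Coef) : Prop := memH s X.1 ∧ memH (s - 1) X.2

/-- The wave group `E(t)(u,v) = (C(t)u + (-Δ)^{-1/2}S(t)v, -(-Δ)^{1/2}S(t)u + C(t)v)`. -/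
def waveGroup (t : ℝ) (X : Coef × Coef) : Coef × Coef :=
  (cosOp t X.1 + sincOp t X.2, -sqrtSinOp t X.1 + cosOp t X.2)

/-- The truncation projection `P_κ`: keeps coefficients with `ℓ ≤ κ`. -/
def projOp (κ : ℕ) (u : Coef) : Coef := fun ℓ m => if ℓ ≤ κ then u ℓ m else 0

/-
Mode by mode, `E(t) - I` acts on `(u^{ℓ,m}, v^{ℓ,m})` by a real `2 × 2` matrix whose entries are
`cos(tμ) - 1`, `sin(tμ)/μ` and `μ sin(tμ)` with `μ = √(ℓ(ℓ+1))`. Each entry is bounded both by a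
constant and by a multiple of `tμ` (or `t`), so by interpolation it is bounded by `t^q μ^q` up to
a constant; this trades `q` derivatives for the factor `t^q`. On the constant mode `ℓ = 0` the
entry `sin(tμ)/μ` is `t` itself, which is where `2T` in the constant comes from. The wave group
commutes with the weights `(1 + ℓ(ℓ+1))^s`, so the estimate follows by summing over the modes.
-/

open Real

def sincMul (t : ℝ) (ℓ : ℕ) : ℝ :=
  if ℓ = 0 then t else Real.sin (t * √(lam ℓ)) / √(lam ℓ)

lemma lam_nonneg (ℓ : ℕ) : 0 ≤ lam ℓ := by unfold lam; positivity

lemma one_le_lam {ℓ : ℕ} (hℓ : ℓ ≠ 0) : 1 ≤ lam ℓ := by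
  have : (1 : ℝ) ≤ ℓ := by exact_mod_cast Nat.one_le_iff_ne_zero.mpr hℓ
  unfold lam; nlinarith

lemma sincOp_apply (t : ℝ) (v : Coef) (ℓ : ℕ) (m : Fin (2 * ℓ + 1)) :
    sincOp t v ℓ m = (sincMul t ℓ : ℂ) * v ℓ m := by
  unfold sincOp sincMul; split_ifs <;> rfl

lemma waveGroup_sub_self_fst (t : ℝ) (X : Coef × Coef) (ℓ : ℕ) (m : Fin (2 * ℓ + 1)) :
    (waveGroup t X - X).1 ℓ m =
      ((cos (t * √(lam ℓ)) - 1 : ℝ) : ℂ) * X.1 ℓ m + (sincMul t ℓ : ℂ) * X.2 ℓ m := by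
  simp only [waveGroup, Prod.fst_sub, Pi.sub_apply, Pi.add_apply, cosOp, sincOp_apply]
  push_cast; ring

lemma waveGroup_sub_self_snd (t : ℝ) (X : Coef × Coef) (ℓ : ℕ) (m : Fin (2 * ℓ + 1)) :
    (waveGroup t X - X).2 ℓ m =
      ((-(√(lam ℓ) * sin (t * √(lam ℓ))) : ℝ) : ℂ) * X.1 ℓ m +
        ((cos (t * √(lam ℓ)) - 1 : ℝ) : ℂ) * X.2 ℓ m := by
  simp only [waveGroup, Prod.snd_sub, Pi.sub_apply, Pi.add_apply, Pi.neg_apply, cosOp, sqrtSinOp]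
  push_cast; ring

lemma le_mul_rpow_of_le_of_le_mul {z A w q : ℝ} (hA : 0 ≤ A) (hw : 0 ≤ w) (hq0 : 0 ≤ q)
    (hq1 : q ≤ 1) (h₁ : z ≤ A) (h₂ : z ≤ A * w) : z ≤ A * w ^ q := by
  rcases le_total w 1 with hw1 | hw1
  · calc z ≤ A * w ^ (1 : ℝ) := by rwa [rpow_one]
      _ ≤ A * w ^ q := mul_le_mul_of_nonneg_left (rpow_le_rpow_of_exponent_ge' hw hw1 hq0 hq1) hA
  · calc z ≤ A * 1 := by rwa [mul_one]
      _ ≤ A * w ^ q := mul_le_mul_of_nonneg_left (one_le_rpow hw1 hq0) hA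

section ModeBounds

variable {q t : ℝ}

lemma le_mul_rpow_one_add_lam {z A : ℝ} (hA : 0 ≤ A) (hq : q ∈ Set.Icc (0 : ℝ) 1) (ht : 0 ≤ t)
    (ℓ : ℕ) (h₁ : z ≤ A) (h₂ : z ≤ A * (t * √(lam ℓ)) ^ 2) :
    z ≤ A * (t ^ q) ^ 2 * (1 + lam ℓ) ^ q := by
  have hlam := lam_nonneg ℓ
  calc z ≤ A * ((t * √(lam ℓ)) ^ 2) ^ q :=
        le_mul_rpow_of_le_of_le_mul hA (sq_nonneg _) hq.1 hq.2 h₁ h₂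
    _ = A * (t ^ q) ^ 2 * lam ℓ ^ q := by
        rw [mul_pow, sq_sqrt hlam, mul_rpow (sq_nonneg t) hlam, rpow_pow_comm ht, mul_assoc]
    _ ≤ A * (t ^ q) ^ 2 * (1 + lam ℓ) ^ q :=
        mul_le_mul_of_nonneg_left (rpow_le_rpow hlam (by linarith) hq.1) (by positivity)

lemma cos_sub_one_sq_le (hq : q ∈ Set.Icc (0 : ℝ) 1) (ht : 0 ≤ t) (ℓ : ℕ) :
    (cos (t * √(lam ℓ)) - 1) ^ 2 ≤ 4 * (t ^ q) ^ 2 * (1 + lam ℓ) ^ q := by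
  set x := t * √(lam ℓ)
  have hcos : 1 - x ^ 2 / 2 ≤ cos x := one_sub_sq_div_two_le_cos
  refine le_mul_rpow_one_add_lam (by norm_num) hq ht ℓ ?_ ?_ <;>
    nlinarith [neg_one_le_cos x, cos_le_one x]

lemma sin_sq_le (hq : q ∈ Set.Icc (0 : ℝ) 1) (ht : 0 ≤ t) (ℓ : ℕ) :
    sin (t * √(lam ℓ)) ^ 2 ≤ (t ^ q) ^ 2 * (1 + lam ℓ) ^ q := by
  simpa using le_mul_rpow_one_add_lam zero_le_one hq ht ℓ (sin_sq_le_one _)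
    (by simpa using sin_sq_le_sq)

lemma sincMul_sq_mul_le (hq : q ∈ Set.Icc (0 : ℝ) 1) (ht : 0 ≤ t) {ℓ : ℕ} (hℓ : ℓ ≠ 0) :
    sincMul t ℓ ^ 2 * (1 + lam ℓ) ≤ 2 * (t ^ q) ^ 2 * (1 + lam ℓ) ^ q := by
  have hlam := one_le_lam hℓ
  have hsin : sincMul t ℓ ^ 2 * (1 + lam ℓ) ≤ 2 * sin (t * √(lam ℓ)) ^ 2 := by
    rw [sincMul, if_neg hℓ, div_pow, sq_sqrt (by linarith), div_mul_eq_mul_div,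
      div_le_iff₀ (by linarith)]
    nlinarith [sq_nonneg (sin (t * √(lam ℓ)))]
  refine le_mul_rpow_one_add_lam (by norm_num) hq ht ℓ ?_ ?_
  · linarith [sin_sq_le_one (t * √(lam ℓ))]
  · linarith [sin_sq_le_sq (x := t * √(lam ℓ))]

lemma sq_le_max_one_sq_mul {T : ℝ} (hq : q ∈ Set.Icc (0 : ℝ) 1) (ht : t ∈ Set.Icc (0 : ℝ) T) :
    t ^ 2 ≤ max 1 T ^ 2 * (t ^ q) ^ 2 := by
  have hM : t ≤ max 1 T := ht.2.trans (le_max_right _ _)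
  have h1M : 1 ≤ max 1 T ^ 2 := one_le_pow₀ (le_max_left _ _)
  rw [rpow_pow_comm ht.1 q 2]
  refine le_mul_rpow_of_le_of_le_mul (by positivity) (sq_nonneg t) hq.1 hq.2 ?_ ?_
  · exact pow_le_pow_left₀ ht.1 hM 2
  · nlinarith [sq_nonneg t]

end ModeBounds

lemma norm_ofReal_mul_add_sq_le (a b : ℝ) (x y : ℂ) :
    ‖(a : ℂ) * x + (b : ℂ) * y‖ ^ 2 ≤ 2 * a ^ 2 * ‖x‖ ^ 2 + 2 * b ^ 2 * ‖y‖ ^ 2 := by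
  have h := norm_add_le ((a : ℂ) * x) ((b : ℂ) * y)
  rw [norm_mul, norm_mul, Complex.norm_real, Complex.norm_real, norm_eq_abs, norm_eq_abs] at h
  calc ‖(a : ℂ) * x + (b : ℂ) * y‖ ^ 2 ≤ (|a| * ‖x‖ + |b| * ‖y‖) ^ 2 := by gcongr
    _ ≤ 2 * (|a| * ‖x‖) ^ 2 + 2 * (|b| * ‖y‖) ^ 2 := by
        nlinarith [sq_nonneg (|a| * ‖x‖ - |b| * ‖y‖)]
    _ = 2 * a ^ 2 * ‖x‖ ^ 2 + 2 * b ^ 2 * ‖y‖ ^ 2 := by rw [mul_pow, mul_pow, sq_abs, sq_abs]; ring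

lemma weighted_block_le {L : ℝ} (hL : 0 < L) (s q K α β γ δ : ℝ) (x y : ℂ)
    (hfst : 2 * α ^ 2 * L + 2 * γ ^ 2 ≤ K * L ^ (1 + q))
    (hsnd : 2 * β ^ 2 * L + 2 * δ ^ 2 ≤ K * L ^ q) :
    L ^ s * ‖(α : ℂ) * x + (β : ℂ) * y‖ ^ 2 + L ^ (s - 1) * ‖(γ : ℂ) * x + (δ : ℂ) * y‖ ^ 2 ≤
      K * (L ^ (s + q) * ‖x‖ ^ 2 + L ^ (s + q - 1) * ‖y‖ ^ 2) := by
  have hs : L ^ s = L ^ (s - 1) * L := by rw [← rpow_add_one hL.ne']; ring_nf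
  have hsq : L ^ (s + q) = L ^ (s - 1) * L ^ (1 + q) := by rw [← rpow_add hL]; ring_nf
  have hsq' : L ^ (s + q - 1) = L ^ (s - 1) * L ^ q := by rw [← rpow_add hL]; ring_nf
  calc L ^ s * ‖(α : ℂ) * x + (β : ℂ) * y‖ ^ 2 + L ^ (s - 1) * ‖(γ : ℂ) * x + (δ : ℂ) * y‖ ^ 2
      ≤ L ^ s * (2 * α ^ 2 * ‖x‖ ^ 2 + 2 * β ^ 2 * ‖y‖ ^ 2) +
          L ^ (s - 1) * (2 * γ ^ 2 * ‖x‖ ^ 2 + 2 * δ ^ 2 * ‖y‖ ^ 2) := by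
        gcongr <;> exact norm_ofReal_mul_add_sq_le _ _ _ _
    _ = L ^ (s - 1) * ((2 * α ^ 2 * L + 2 * γ ^ 2) * ‖x‖ ^ 2 +
          (2 * β ^ 2 * L + 2 * δ ^ 2) * ‖y‖ ^ 2) := by rw [hs]; ring
    _ ≤ L ^ (s - 1) * (K * L ^ (1 + q) * ‖x‖ ^ 2 + K * L ^ q * ‖y‖ ^ 2) := by gcongr
    _ = K * (L ^ (s + q) * ‖x‖ ^ 2 + L ^ (s + q - 1) * ‖y‖ ^ 2) := by rw [hsq, hsq']; ring

lemma waveGroup_sub_self_mode_le {T C q t : ℝ} (hC : max 4 (2 * T) ≤ C)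
    (hq : q ∈ Set.Icc (0 : ℝ) 1) (ht : t ∈ Set.Icc (0 : ℝ) T) (s : ℝ) (X : Coef × Coef)
    (ℓ : ℕ) (m : Fin (2 * ℓ + 1)) :
    (1 + lam ℓ) ^ s * ‖(waveGroup t X - X).1 ℓ m‖ ^ 2 +
        (1 + lam ℓ) ^ (s - 1) * ‖(waveGroup t X - X).2 ℓ m‖ ^ 2 ≤
      (C * t ^ q) ^ 2 *
        ((1 + lam ℓ) ^ (s + q) * ‖X.1 ℓ m‖ ^ 2 + (1 + lam ℓ) ^ (s + q - 1) * ‖X.2 ℓ m‖ ^ 2) := by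
  have hlam := lam_nonneg ℓ
  have h4 : 4 ≤ C := (le_max_left _ _).trans hC
  have hcos := cos_sub_one_sq_le hq ht.1 ℓ
  have hsin := sin_sq_le hq ht.1 ℓ
  have hL : 0 ≤ 1 + lam ℓ := by linarith
  have hP : 0 ≤ (t ^ q) ^ 2 * (1 + lam ℓ) ^ q := by positivity
  have h16 : 16 * ((t ^ q) ^ 2 * (1 + lam ℓ) ^ q) ≤ C ^ 2 * ((t ^ q) ^ 2 * (1 + lam ℓ) ^ q) :=
    mul_le_mul_of_nonneg_right (by nlinarith) hP
  rw [waveGroup_sub_self_fst, waveGroup_sub_self_snd]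
  refine weighted_block_le (by linarith) _ _ _ _ _ _ _ _ _ ?_ ?_
  · have hsin' : (√(lam ℓ) * sin (t * √(lam ℓ))) ^ 2 ≤ (1 + lam ℓ) * sin (t * √(lam ℓ)) ^ 2 := by
      rw [mul_pow, sq_sqrt hlam]; gcongr; linarith
    rw [rpow_add (by linarith), rpow_one, neg_sq]
    nlinarith [mul_le_mul_of_nonneg_right hcos hL, mul_le_mul_of_nonneg_left hsin hL,
      mul_le_mul_of_nonneg_right h16 hL]
  · rcases eq_or_ne ℓ 0 with rfl | hℓ
    · have hM : 2 * max 1 T ≤ C := by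
        rw [mul_max_of_nonneg _ _ zero_le_two]
        exact le_trans (max_le_max (by norm_num : (2 : ℝ) * 1 ≤ 4) le_rfl) hC
      have ht2 := sq_le_max_one_sq_mul hq ht
      have hM2 : 4 * max 1 T ^ 2 * (t ^ q) ^ 2 ≤ C ^ 2 * (t ^ q) ^ 2 :=
        mul_le_mul_of_nonneg_right (by nlinarith [le_max_left 1 T]) (sq_nonneg _)
      simp only [sincMul, lam, ↓reduceIte, CharP.cast_eq_zero, zero_mul, sqrt_zero, mul_zero,
        cos_zero, sub_self, add_zero, one_rpow, mul_one]
      nlinarith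
    · have hsinc := sincMul_sq_mul_le hq ht.1 hℓ
      nlinarith

lemma hnormSq_summand_nonneg (s : ℝ) (u : Coef) (ℓ : ℕ) :
    0 ≤ ∑ m : Fin (2 * ℓ + 1), (1 + lam ℓ) ^ s * ‖u ℓ m‖ ^ 2 := by
  have := lam_nonneg ℓ
  positivity

lemma hnormPairSq_le_of_forall_le {s r K : ℝ} {X Y : Coef × Coef} (hX : memHPair r X)
    (h : ∀ ℓ m, (1 + lam ℓ) ^ s * ‖Y.1 ℓ m‖ ^ 2 + (1 + lam ℓ) ^ (s - 1) * ‖Y.2 ℓ m‖ ^ 2 ≤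
      K * ((1 + lam ℓ) ^ r * ‖X.1 ℓ m‖ ^ 2 + (1 + lam ℓ) ^ (r - 1) * ‖X.2 ℓ m‖ ^ 2)) :
    hnormPairSq s Y ≤ K * hnormPairSq r X := by
  set F := fun ℓ => ∑ m : Fin (2 * ℓ + 1), (1 + lam ℓ) ^ s * ‖Y.1 ℓ m‖ ^ 2
  set G := fun ℓ => ∑ m : Fin (2 * ℓ + 1), (1 + lam ℓ) ^ (s - 1) * ‖Y.2 ℓ m‖ ^ 2
  set U := fun ℓ => ∑ m : Fin (2 * ℓ + 1), (1 + lam ℓ) ^ r * ‖X.1 ℓ m‖ ^ 2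
  set V := fun ℓ => ∑ m : Fin (2 * ℓ + 1), (1 + lam ℓ) ^ (r - 1) * ‖X.2 ℓ m‖ ^ 2
  have hFG : ∀ ℓ, F ℓ + G ℓ ≤ K * (U ℓ + V ℓ) := fun ℓ => by
    simp only [F, G, U, V, ← Finset.sum_add_distrib, Finset.mul_sum]
    exact Finset.sum_le_sum fun m _ => h ℓ m
  have hW : Summable fun ℓ => K * (U ℓ + V ℓ) := (hX.1.add hX.2).mul_left K
  have hF0 := hnormSq_summand_nonneg s Y.1
  have hG0 := hnormSq_summand_nonneg (s - 1) Y.2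
  have hF : Summable F :=
    .of_nonneg_of_le hF0 (fun ℓ => (le_add_of_nonneg_right (hG0 ℓ)).trans (hFG ℓ)) hW
  have hG : Summable G :=
    .of_nonneg_of_le hG0 (fun ℓ => (le_add_of_nonneg_left (hF0 ℓ)).trans (hFG ℓ)) hW
  calc hnormPairSq s Y = ∑' ℓ, (F ℓ + G ℓ) := (hF.tsum_add hG).symm
    _ ≤ ∑' ℓ, K * (U ℓ + V ℓ) := hF.add hG |>.tsum_le_tsum hFG hW
    _ = K * hnormPairSq r X := by rw [tsum_mul_left, hX.1.tsum_add hX.2]; rfl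

theorem waveGroup_sub_id_hnormPair_le_general (T : ℝ) (s q t : ℝ)
    (hq : q ∈ Set.Icc (0 : ℝ) 1) (ht : t ∈ Set.Icc (0 : ℝ) T)
    (X : Coef × Coef) (hX : memHPair (s + q) X) :
    hnormPair s (waveGroup t X - X) ≤ max 4 (2 * T) * t ^ q * hnormPair (s + q) X := by
  have hK : 0 ≤ max 4 (2 * T) * t ^ q :=
    mul_nonneg (le_trans (by norm_num) (le_max_left _ _)) (rpow_nonneg ht.1 q)
  have hsq : hnormPairSq s (waveGroup t X - X) ≤
      (max 4 (2 * T) * t ^ q) ^ 2 * hnormPairSq (s + q) X :=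
    hnormPairSq_le_of_forall_le hX (waveGroup_sub_self_mode_le le_rfl hq ht s X)
  calc hnormPair s (waveGroup t X - X)
      ≤ √((max 4 (2 * T) * t ^ q) ^ 2 * hnormPairSq (s + q) X) := sqrt_le_sqrt hsq
    _ = max 4 (2 * T) * t ^ q * hnormPair (s + q) X := by
        rw [sqrt_mul (sq_nonneg _), sqrt_sq hK]; rfl

/-- Lemma 2.2, group estimate:
`‖(E(t) - I)X‖_{ℍ^s} ≤ max(4, 2T) t^q ‖X‖_{ℍ^{s+q}}` for `q ∈ [0,1]`, `t ∈ [0,T]`. -/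
theorem waveGroup_sub_id_hnormPair_le (T : ℝ) (hT : 0 < T) (s q t : ℝ)
    (hq : q ∈ Set.Icc (0 : ℝ) 1) (ht : t ∈ Set.Icc (0 : ℝ) T)
    (X : Coef × Coef) (hX : memHPair (s + q) X) :
    hnormPair s (waveGroup t X - X) ≤ max 4 (2 * T) * t ^ q * hnormPair (s + q) X :=
  waveGroup_sub_id_hnormPair_le_general T s q t hq ht X hX
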